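/- Let V be an n × n positive definite diagonal matrix, W = (W₀, W₁) an n × k matrix of full column rank with W₀ its first column. Define Z_δ = W (Wᵀ V W)⁻¹ Wᵀ and Z_{δ₀} = W₀ (W₀ᵀ V W₀)⁻¹ W₀ᵀ. Then V^{1/2} (Z_δ - Z_{δ₀}) V^{1/2} is a symmetric idempotent matrix of rank k - 1; in particular Z_δ - Z_{δ₀} is positive semidefinite and tr(V (Z_δ - Z_{δ₀})) = k - 1. -/

import Mathlib

open Matrix

/-- rank of a real idempotent matrix equals its trace. -/
lemma rank_eq_trace_of_idem {n : ℕ} (M : Matrix (Fin n) (Fin n) ℝ) (h : M * M = M) :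
    (M.rank : ℝ) = M.trace := by
  have hf : M.mulVecLin ∘ₗ M.mulVecLin = M.mulVecLin := by
    rw [← Matrix.mulVecLin_mul, h]
  have hproj : LinearMap.IsProj (LinearMap.range M.mulVecLin) M.mulVecLin := by
    refine ⟨fun x => LinearMap.mem_range_self _ x, ?_⟩
    rintro x ⟨y, rfl⟩
    exact LinearMap.congr_fun hf y
  have htr := hproj.trace
  have h2 : LinearMap.trace ℝ (Fin n → ℝ) M.mulVecLin = M.trace := by
    rw [LinearMap.trace_eq_matrix_trace ℝ (Pi.basisFun ℝ (Fin n)),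
      LinearMap.toMatrix_eq_toMatrix', ← Matrix.toLin'_apply', LinearMap.toMatrix'_toLin']
  rw [← h2, htr]
  rfl

/-- `BᵀVB` is positive definite when `V` is positive diagonal and `B` has trivial kernel. -/
lemma posdef_aux {n m : ℕ} (v : Fin n → ℝ) (hv : ∀ l, 0 < v l)
    (B : Matrix (Fin n) (Fin m) ℝ) (hB : ∀ x, B.mulVec x = 0 → x = 0) :
    (Bᵀ * Matrix.diagonal v * B).PosDef := by
  refine Matrix.posDef_iff_dotProduct_mulVec.mpr ⟨?_, ?_⟩
  · rw [Matrix.IsHermitian, Matrix.conjTranspose_eq_transpose_of_trivial,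
      Matrix.transpose_mul, Matrix.transpose_mul, Matrix.transpose_transpose,
      Matrix.diagonal_transpose, Matrix.mul_assoc]
  · intro x hx
    have hstar : star x = x := by funext i; simp
    have hy : B.mulVec x ≠ 0 := fun h0 => hx (hB x h0)
    rw [hstar, ← Matrix.mulVec_mulVec, ← Matrix.mulVec_mulVec,
      dotProduct_mulVec, Matrix.vecMul_transpose]
    set y := B.mulVec x with hydef
    have heq : y ⬝ᵥ (Matrix.diagonal v).mulVec y = ∑ l, v l * (y l * y l) := by
      simp only [dotProduct, Matrix.mulVec_diagonal]; congr 1; funext l; ring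
    rw [heq]
    obtain ⟨l₀, hl₀⟩ : ∃ l, y l ≠ 0 := by
      by_contra hcon
      push_neg at hcon
      exact hy (funext fun l => hcon l)
    refine Finset.sum_pos' (fun l _ => mul_nonneg (hv l).le (mul_self_nonneg _)) ⟨l₀, Finset.mem_univ _, ?_⟩
    exact mul_pos (hv l₀) (mul_self_pos.mpr hl₀)


/-- With `V` positive definite diagonal, `W` an `n × k` matrix of full column rank with
first column `W₀`, `Z_δ = W(WᵀVW)⁻¹Wᵀ` and `Z_{δ₀} = W₀(W₀ᵀVW₀)⁻¹W₀ᵀ`, the matrix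
`V^{1/2}(Z_δ - Z_{δ₀})V^{1/2}` is symmetric idempotent of rank `k - 1`; in particular
`Z_δ - Z_{δ₀}` is positive semidefinite and `tr(V(Z_δ - Z_{δ₀})) = k - 1`. -/
theorem projection_difference_idempotent
    (n k : ℕ) (hk : 1 ≤ k) (v : Fin n → ℝ) (hv : ∀ ℓ, 0 < v ℓ)
    (W : Matrix (Fin n) (Fin k) ℝ) (hW : W.rank = k) (hk0 : 0 < k) :
    let V : Matrix (Fin n) (Fin n) ℝ := Matrix.diagonal v
    let S : Matrix (Fin n) (Fin n) ℝ := Matrix.diagonal (fun ℓ => Real.sqrt (v ℓ))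
    let W₀ : Matrix (Fin n) (Fin 1) ℝ := Matrix.of (fun i _ => W i ⟨0, hk0⟩)
    let Zδ : Matrix (Fin n) (Fin n) ℝ := W * (W.transpose * V * W)⁻¹ * W.transpose
    let Zδ₀ : Matrix (Fin n) (Fin n) ℝ := W₀ * (W₀.transpose * V * W₀)⁻¹ * W₀.transpose
    let M : Matrix (Fin n) (Fin n) ℝ := S * (Zδ - Zδ₀) * S
    M.IsSymm ∧ M * M = M ∧ M.rank = k - 1 ∧
      (Zδ - Zδ₀).PosSemidef ∧ (V * (Zδ - Zδ₀)).trace = (k : ℝ) - 1 := by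
  intro V S W₀ Zδ Zδ₀ M
  have hsq : ∀ l, Real.sqrt (v l) ≠ 0 := fun l => (Real.sqrt_pos.mpr (hv l)).ne'
  have hSS : S * S = V := by
    show Matrix.diagonal _ * Matrix.diagonal _ = Matrix.diagonal v
    rw [Matrix.diagonal_mul_diagonal]
    exact congrArg Matrix.diagonal (funext fun l => Real.mul_self_sqrt (hv l).le)
  have hSsymm : Sᵀ = S := Matrix.diagonal_transpose _
  have hVsymm : Vᵀ = V := Matrix.diagonal_transpose _
  -- injectivity of W
  have hWinj : ∀ x, W.mulVec x = 0 → x = 0 := by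
    have h1 := LinearMap.finrank_range_add_finrank_ker W.mulVecLin
    have h2 : Module.finrank ℝ (LinearMap.range W.mulVecLin) = k := hW
    rw [h2, Module.finrank_pi, Fintype.card_fin] at h1
    have hker : LinearMap.ker W.mulVecLin = ⊥ :=
      Submodule.finrank_eq_zero.mp (by omega)
    intro x hx
    have : x ∈ LinearMap.ker W.mulVecLin := hx
    rw [hker] at this
    simpa using this
  have hW₀inj : ∀ x : Fin 1 → ℝ, W₀.mulVec x = 0 → x = 0 := by
    intro x hx
    have he : W.mulVec (fun j => if j = ⟨0, hk0⟩ then x 0 else 0) = 0 := by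
      funext i
      have h0 := congrFun hx i
      simp only [Matrix.mulVec, dotProduct, W₀, Matrix.of_apply, Fin.sum_univ_one,
        Pi.zero_apply] at h0
      simp only [Matrix.mulVec, dotProduct, mul_ite, mul_zero, Pi.zero_apply,
        Finset.sum_ite_eq', Finset.mem_univ, if_true]
      exact h0
    have h2 := hWinj _ he
    funext j
    have h1 := congrFun h2 ⟨0, hk0⟩
    simp only [if_pos rfl] at h1
    rw [Subsingleton.elim j 0]
    exact h1
  -- positive definiteness and inverses
  have hpd : (Wᵀ * V * W).PosDef := posdef_aux v hv W hWinj
  have hpd₀ : (W₀ᵀ * V * W₀).PosDef := posdef_aux v hv W₀ hW₀inj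
  have hdet : IsUnit (Wᵀ * V * W).det := hpd.det_pos.ne'.isUnit
  have hdet₀ : IsUnit (W₀ᵀ * V * W₀).det := hpd₀.det_pos.ne'.isUnit
  obtain ⟨G, hGdef⟩ : ∃ G : Matrix (Fin k) (Fin k) ℝ, G = (Wᵀ * V * W)⁻¹ := ⟨_, rfl⟩
  obtain ⟨G₀, hG₀def⟩ : ∃ G₀ : Matrix (Fin 1) (Fin 1) ℝ, G₀ = (W₀ᵀ * V * W₀)⁻¹ := ⟨_, rfl⟩
  have hGl : G * (Wᵀ * V * W) = 1 := by rw [hGdef]; exact Matrix.nonsing_inv_mul _ hdet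
  have hGr : (Wᵀ * V * W) * G = 1 := by rw [hGdef]; exact Matrix.mul_nonsing_inv _ hdet
  have hG₀l : G₀ * (W₀ᵀ * V * W₀) = 1 := by rw [hG₀def]; exact Matrix.nonsing_inv_mul _ hdet₀
  have hG₀r : (W₀ᵀ * V * W₀) * G₀ = 1 := by rw [hG₀def]; exact Matrix.mul_nonsing_inv _ hdet₀
  have hGsymm : Gᵀ = G := by
    have h : (Wᵀ * V * W)ᵀ = Wᵀ * V * W := by
      simp only [Matrix.transpose_mul, Matrix.transpose_transpose, hVsymm, Matrix.mul_assoc]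
    rw [hGdef, Matrix.transpose_nonsing_inv, h]
  have hG₀symm : G₀ᵀ = G₀ := by
    have h : (W₀ᵀ * V * W₀)ᵀ = W₀ᵀ * V * W₀ := by
      simp only [Matrix.transpose_mul, Matrix.transpose_transpose, hVsymm, Matrix.mul_assoc]
    rw [hG₀def, Matrix.transpose_nonsing_inv, h]
  obtain ⟨A, hAdef⟩ : ∃ A : Matrix (Fin n) (Fin k) ℝ, A = S * W := ⟨_, rfl⟩
  obtain ⟨A₀, hA₀def⟩ : ∃ A₀ : Matrix (Fin n) (Fin 1) ℝ, A₀ = S * W₀ := ⟨_, rfl⟩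
  have hATA : Aᵀ * A = Wᵀ * V * W := by
    rw [hAdef, Matrix.transpose_mul, hSsymm, Matrix.mul_assoc, ← Matrix.mul_assoc S S W, hSS,
      ← Matrix.mul_assoc]
  have hATA₀ : A₀ᵀ * A₀ = W₀ᵀ * V * W₀ := by
    rw [hA₀def, Matrix.transpose_mul, hSsymm, Matrix.mul_assoc, ← Matrix.mul_assoc S S W₀, hSS,
      ← Matrix.mul_assoc]
  obtain ⟨P, hPdef⟩ : ∃ P : Matrix (Fin n) (Fin n) ℝ, P = A * G * Aᵀ := ⟨_, rfl⟩
  obtain ⟨P₀, hP₀def⟩ : ∃ P₀ : Matrix (Fin n) (Fin n) ℝ, P₀ = A₀ * G₀ * A₀ᵀ := ⟨_, rfl⟩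
  have hM : M = P - P₀ := by
    show S * (Zδ - Zδ₀) * S = P - P₀
    show S * (W * (Wᵀ * V * W)⁻¹ * Wᵀ - W₀ * (W₀ᵀ * V * W₀)⁻¹ * W₀ᵀ) * S = P - P₀
    rw [← hGdef, ← hG₀def, hPdef, hP₀def, hAdef, hA₀def]
    simp only [Matrix.mul_sub, Matrix.sub_mul, Matrix.transpose_mul, hSsymm, Matrix.mul_assoc]
  have hPsymm : Pᵀ = P := by
    rw [hPdef]
    simp only [Matrix.transpose_mul, Matrix.transpose_transpose, hGsymm, Matrix.mul_assoc]
  have hP₀symm : P₀ᵀ = P₀ := by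
    rw [hP₀def]
    simp only [Matrix.transpose_mul, Matrix.transpose_transpose, hG₀symm, Matrix.mul_assoc]
  have hPA : P * A = A := by
    calc P * A = A * (G * (Aᵀ * A)) := by rw [hPdef]; simp only [Matrix.mul_assoc]
    _ = A := by rw [hATA, hGl, Matrix.mul_one]
  have hP₀A₀ : P₀ * A₀ = A₀ := by
    calc P₀ * A₀ = A₀ * (G₀ * (A₀ᵀ * A₀)) := by rw [hP₀def]; simp only [Matrix.mul_assoc]
    _ = A₀ := by rw [hATA₀, hG₀l, Matrix.mul_one]
  have hPP : P * P = P := by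
    nth_rewrite 2 [hPdef]
    rw [← Matrix.mul_assoc, ← Matrix.mul_assoc, hPA, ← hPdef]
  have hP₀P₀ : P₀ * P₀ = P₀ := by
    nth_rewrite 2 [hP₀def]
    rw [← Matrix.mul_assoc, ← Matrix.mul_assoc, hP₀A₀, ← hP₀def]
  -- W₀ = W * E
  obtain ⟨E, hEdef⟩ : ∃ E : Matrix (Fin k) (Fin 1) ℝ,
      E = Matrix.of (fun j (_ : Fin 1) => if j = (⟨0, hk0⟩ : Fin k) then (1 : ℝ) else 0) :=
    ⟨_, rfl⟩
  have hW₀E : W₀ = W * E := by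
    ext i j
    show W i ⟨0, hk0⟩ = _
    simp only [Matrix.mul_apply, hEdef, Matrix.of_apply, mul_ite, mul_one, mul_zero,
      Finset.sum_ite_eq', Finset.mem_univ, if_true]
  have hA₀E : A₀ = A * E := by
    rw [hA₀def, hW₀E, hAdef, Matrix.mul_assoc]
  have hPA₀ : P * A₀ = A₀ := by
    rw [hA₀E, ← Matrix.mul_assoc, hPA]
  have hPP₀ : P * P₀ = P₀ := by
    nth_rewrite 1 [hP₀def]
    rw [← Matrix.mul_assoc, ← Matrix.mul_assoc, hPA₀, ← hP₀def]
  have hP₀P : P₀ * P = P₀ := by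
    calc P₀ * P = (P * P₀)ᵀ := by rw [Matrix.transpose_mul, hPsymm, hP₀symm]
    _ = P₀ := by rw [hPP₀, hP₀symm]
  -- the five goals
  have hMsymm : Mᵀ = M := by
    rw [hM, Matrix.transpose_sub, hPsymm, hP₀symm]
  have hMM : M * M = M := by
    rw [hM, Matrix.sub_mul, Matrix.mul_sub, Matrix.mul_sub, hPP, hPP₀, hP₀P, hP₀P₀]
    abel
  have htrP : P.trace = (k : ℝ) := by
    rw [hPdef, Matrix.trace_mul_comm, ← Matrix.mul_assoc, hATA, hGr]
    simp
  have htrP₀ : P₀.trace = (1 : ℝ) := by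
    rw [hP₀def, Matrix.trace_mul_comm, ← Matrix.mul_assoc, hATA₀, hG₀r]
    simp
  have htrM : M.trace = (k : ℝ) - 1 := by
    rw [hM, Matrix.trace_sub, htrP, htrP₀]
  refine ⟨hMsymm, hMM, ?_, ?_, ?_⟩
  · have h1 := rank_eq_trace_of_idem M hMM
    rw [htrM] at h1
    have h2 : ((k - 1 : ℕ) : ℝ) = (k : ℝ) - 1 := by
      rw [Nat.cast_sub hk]; norm_num
    have h3 : (M.rank : ℝ) = ((k - 1 : ℕ) : ℝ) := by rw [h1, h2]
    exact_mod_cast h3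
  · have hMpsd : M.PosSemidef := by
      have h := Matrix.posSemidef_conjTranspose_mul_self M
      rwa [Matrix.conjTranspose_eq_transpose_of_trivial, hMsymm, hMM] at h
    obtain ⟨B, hBdef⟩ : ∃ B : Matrix (Fin n) (Fin n) ℝ,
        B = Matrix.diagonal (fun l => (Real.sqrt (v l))⁻¹) := ⟨_, rfl⟩
    have hBS : B * S = 1 := by
      rw [hBdef]
      show Matrix.diagonal _ * Matrix.diagonal _ = 1
      rw [Matrix.diagonal_mul_diagonal, ← Matrix.diagonal_one]
      exact congrArg Matrix.diagonal (funext fun l => inv_mul_cancel₀ (hsq l))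
    have hSB : S * B = 1 := by
      rw [hBdef]
      show Matrix.diagonal _ * Matrix.diagonal _ = 1
      rw [Matrix.diagonal_mul_diagonal, ← Matrix.diagonal_one]
      exact congrArg Matrix.diagonal (funext fun l => mul_inv_cancel₀ (hsq l))
    have hkey : B * M * B = Zδ - Zδ₀ := by
      calc B * M * B = (B * S) * (Zδ - Zδ₀) * (S * B) := by
            show B * (S * (Zδ - Zδ₀) * S) * B = _
            simp only [Matrix.mul_assoc]
      _ = Zδ - Zδ₀ := by rw [hBS, hSB, Matrix.one_mul, Matrix.mul_one]
    have h := hMpsd.mul_mul_conjTranspose_same B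
    rwa [Matrix.conjTranspose_eq_transpose_of_trivial, hBdef, Matrix.diagonal_transpose,
      ← hBdef, hkey] at h
  · have hV : V * (Zδ - Zδ₀) = S * (S * (Zδ - Zδ₀)) := by
      rw [← hSS, Matrix.mul_assoc]
    rw [hV, Matrix.trace_mul_comm]
    exact htrM
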